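/- arXiv:1306.5258 — 3 statements merged into one kernel-verified Lean document; each statement's English description precedes it below -/
import Mathlib

section
/- Let X and Y be topological spaces and A a closed subset of X. Suppose F1 : X → 2^Y and F2 : X → 2^Y are lower semicontinuous correspondences (i.e., for each x and each open V meeting F(x) there is a neighborhood U of x with F(y) ∩ V ≠ ∅ for all y ∈ U) such that F2(x) ⊆ F1(x) for all x ∈ A. Then the correspondence F : X → 2^Y defined by F(x) = F1(x) if x ∉ A and F(x) = F2(x) if x ∈ A is lower semicontinuous. -/
/-- A correspondence `F : X → 2^Y` is lower semicontinuous if for each `x` and each open `V`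
meeting `F x`, there is an open neighbourhood `U` of `x` with `F y ∩ V ≠ ∅` for all `y ∈ U`. -/
def LowerSemicontinuousCorr {X Y : Type*} [TopologicalSpace X] [TopologicalSpace Y]
    (F : X → Set Y) : Prop :=
  ∀ x : X, ∀ V : Set Y, IsOpen V → (F x ∩ V).Nonempty →
    ∃ U : Set X, IsOpen U ∧ x ∈ U ∧ ∀ y ∈ U, (F y ∩ V).Nonempty

open Classical in
theorem stmt_0 {X Y : Type*} [TopologicalSpace X] [TopologicalSpace Y]
    (A : Set X) (hA : IsClosed A)
    (F1 F2 : X → Set Y)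
    (h1 : LowerSemicontinuousCorr F1) (h2 : LowerSemicontinuousCorr F2)
    (hsub : ∀ x ∈ A, F2 x ⊆ F1 x) :
    LowerSemicontinuousCorr (fun x => if x ∈ A then F2 x else F1 x) := by
  intro x V hV hne
  by_cases hx : x ∈ A
  · simp only [hx, if_true] at hne
    obtain ⟨U2, hU2o, hxU2, hU2⟩ := h2 x V hV hne
    have hne1 : (F1 x ∩ V).Nonempty := by
      obtain ⟨y, hy1, hy2⟩ := hne
      exact ⟨y, hsub x hx hy1, hy2⟩
    obtain ⟨U1, hU1o, hxU1, hU1⟩ := h1 x V hV hne1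
    refine ⟨U1 ∩ U2, hU1o.inter hU2o, ⟨hxU1, hxU2⟩, ?_⟩
    intro y ⟨hy1, hy2⟩
    by_cases hyA : y ∈ A
    · simpa [hyA] using hU2 y hy2
    · simpa [hyA] using hU1 y hy1
  · simp only [hx, if_false] at hne
    obtain ⟨U1, hU1o, hxU1, hU1⟩ := h1 x V hV hne
    refine ⟨U1 ∩ Aᶜ, hU1o.inter hA.isOpen_compl, ⟨hxU1, hx⟩, ?_⟩
    intro y ⟨hy1, hy2⟩
    rw [Set.mem_compl_iff] at hy2
    simpa [hy2] using hU1 y hy1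
end

section
/- (Kuratowski–Ryll-Nardzewski selection theorem) Every weakly measurable correspondence F : T → 2^Y with nonempty closed values from a measurable space (T, 𝒯) into a Polish space Y admits a measurable selector, i.e., a measurable function f : T → Y with f(t) ∈ F(t) for all t ∈ T. -/
/-!
Fix a complete metric and a dense sequence `u` in `Y`. If `g` is measurable and every `g t` lies
within `r` of `F t`, then sending `t` to the first `u n` that lies within `r + s` of `g t` and
within `s` of `F t` is again measurable (by weak measurability of `F`) and lies within `s` of
`F t`. Iterating with `r = 2⁻¹ ^ n` gives measurable maps that are uniformly Cauchy; their
pointwise limit is measurable and, as the values of `F` are closed, a selector.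
-/

open Metric Filter Topology TopologicalSpace

theorem exists_seq_of_exists_succ {α : Type*} {P : ℕ → α → Prop}
    {R : ℕ → α → α → Prop} (h₀ : ∃ a, P 0 a)
    (hsucc : ∀ n a, P n a → ∃ b, P (n + 1) b ∧ R n a b) :
    ∃ f : ℕ → α, ∀ n, P n (f n) ∧ R n (f n) (f (n + 1)) := by
  obtain ⟨a₀, ha₀⟩ := h₀
  choose next hnextP hnextR using hsucc
  let f : ∀ n, {a // P n a} :=
    fun n => Nat.rec ⟨a₀, ha₀⟩ (fun n a => ⟨next n a a.2, hnextP n a a.2⟩) n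
  exact ⟨fun n => (f n).1, fun n => ⟨(f n).2, hnextR n _ (f n).2⟩⟩

theorem exists_measurable_choice_of_cover {T β : Type*} [MeasurableSpace T]
    [MeasurableSpace β] (u : ℕ → β) {A : ℕ → Set T} (hA : ∀ n, MeasurableSet (A n))
    (hcover : ∀ t, ∃ n, t ∈ A n) :
    ∃ g : T → β, Measurable g ∧ ∀ t, ∃ n, t ∈ A n ∧ g t = u n := by
  classical
  exact ⟨fun t => u (Nat.find (hcover t)), measurable_from_nat.comp (measurable_find hcover hA),
    fun t => ⟨_, Nat.find_spec (hcover t), rfl⟩⟩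

theorem Metric.infDist_lt_of_inter_ball_nonempty {Y : Type*} [PseudoMetricSpace Y]
    {s : Set Y} {x : Y} {r : ℝ} (h : (s ∩ ball x r).Nonempty) : infDist x s < r := by
  obtain ⟨y, hys, hyx⟩ := h
  exact (infDist_le_dist_of_mem hys).trans_lt (mem_ball'.1 hyx)

theorem IsClosed.mem_of_tendsto_infDist_zero {Y : Type*} [PseudoMetricSpace Y] {s : Set Y}
    (hs : IsClosed s) (hne : s.Nonempty) {x : ℕ → Y} {a : Y} (hx : Tendsto x atTop (𝓝 a))
    (hdist : Tendsto (fun n => infDist (x n) s) atTop (𝓝 0)) : a ∈ s := by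
  have hlim : Tendsto (fun n => infDist (x n) s) atTop (𝓝 (infDist a s)) :=
    ((continuous_infDist_pt s).tendsto a).comp hx
  exact (hs.mem_iff_infDist_zero hne).2 (tendsto_nhds_unique hlim hdist)

def IsWeaklyMeasurable {T Y : Type*} [MeasurableSpace T] [TopologicalSpace Y]
    (F : T → Set Y) : Prop :=
  ∀ U : Set Y, IsOpen U → MeasurableSet {t : T | (F t ∩ U).Nonempty}

section Approximation

variable {T Y : Type*} [MeasurableSpace T] [PseudoMetricSpace Y] [MeasurableSpace Y]
  {F : T → Set Y}

theorem exists_measurable_infDist_lt (u : ℕ → Y) (hu : DenseRange u)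
    (hne : ∀ t, (F t).Nonempty) (hweak : IsWeaklyMeasurable F) {ε : ℝ} (hε : 0 < ε) :
    ∃ g : T → Y, Measurable g ∧ ∀ t, infDist (g t) (F t) < ε := by
  have hcover : ∀ t, ∃ n, t ∈ {t | (F t ∩ ball (u n) ε).Nonempty} := fun t => by
    obtain ⟨y, hy⟩ := hne t
    obtain ⟨n, hn⟩ := hu.exists_dist_lt y hε
    exact ⟨n, y, hy, hn⟩
  obtain ⟨g, hg, hgu⟩ :=
    exists_measurable_choice_of_cover u (fun n => hweak _ isOpen_ball) hcover
  refine ⟨g, hg, fun t => ?_⟩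
  obtain ⟨n, hn, hgt⟩ := hgu t
  exact hgt ▸ infDist_lt_of_inter_ball_nonempty hn

variable [OpensMeasurableSpace Y]

theorem exists_measurable_infDist_lt_of_infDist_lt (u : ℕ → Y) (hu : DenseRange u)
    (hne : ∀ t, (F t).Nonempty) (hweak : IsWeaklyMeasurable F)
    {g : T → Y} (hg : Measurable g) {r s : ℝ} (hgr : ∀ t, infDist (g t) (F t) < r)
    (hs : 0 < s) :
    ∃ g' : T → Y, Measurable g' ∧ (∀ t, infDist (g' t) (F t) < s) ∧
      ∀ t, dist (g t) (g' t) < r + s := by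
  set A : ℕ → Set T := fun n =>
    {t | (F t ∩ ball (u n) s).Nonempty} ∩ g ⁻¹' ball (u n) (r + s)
  have hA : ∀ n, MeasurableSet (A n) := fun n =>
    (hweak _ isOpen_ball).inter (measurableSet_ball.preimage hg)
  have hcover : ∀ t, ∃ n, t ∈ A n := fun t => by
    obtain ⟨y, hyF, hgy⟩ := (infDist_lt_iff (hne t)).1 (hgr t)
    obtain ⟨n, hn⟩ := hu.exists_dist_lt y hs
    exact ⟨n, ⟨y, hyF, hn⟩, (dist_triangle _ y _).trans_lt (add_lt_add hgy hn)⟩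
  obtain ⟨g', hg', hg'u⟩ := exists_measurable_choice_of_cover u hA hcover
  refine ⟨g', hg', fun t => ?_, fun t => ?_⟩ <;>
    obtain ⟨n, hn, hg't⟩ := hg'u t <;> rw [hg't]
  · exact infDist_lt_of_inter_ball_nonempty hn.1
  · exact hn.2

theorem exists_seq_measurable_infDist_lt (u : ℕ → Y) (hu : DenseRange u)
    (hne : ∀ t, (F t).Nonempty) (hweak : IsWeaklyMeasurable F) :
    ∃ g : ℕ → T → Y,
      ∀ n, (Measurable (g n) ∧ ∀ t, infDist (g n t) (F t) < 2⁻¹ ^ n) ∧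
      ∀ t, dist (g n t) (g (n + 1) t) ≤ 3 / 2 * 2⁻¹ ^ n := by
  refine exists_seq_of_exists_succ
    (P := fun n g => Measurable g ∧ ∀ t, infDist (g t) (F t) < 2⁻¹ ^ n)
    (R := fun n g g' => ∀ t, dist (g t) (g' t) ≤ 3 / 2 * 2⁻¹ ^ n)
    (exists_measurable_infDist_lt u hu hne hweak (by norm_num)) fun n g hg => ?_
  obtain ⟨g', hg', hg'F, hgg'⟩ := exists_measurable_infDist_lt_of_infDist_lt u hu hne hweak
    hg.1 hg.2 (by positivity : (0 : ℝ) < 2⁻¹ ^ (n + 1))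
  refine ⟨g', ⟨hg', hg'F⟩, fun t => (hgg' t).le.trans_eq ?_⟩
  ring

variable [CompleteSpace Y]

theorem exists_tendsto_measurable_infDist_tendsto_zero (u : ℕ → Y) (hu : DenseRange u)
    (hne : ∀ t, (F t).Nonempty) (hweak : IsWeaklyMeasurable F) :
    ∃ (g : ℕ → T → Y) (f : T → Y), (∀ n, Measurable (g n)) ∧
      (∀ t, Tendsto (g · t) atTop (𝓝 (f t))) ∧
      ∀ t, Tendsto (fun n => infDist (g n t) (F t)) atTop (𝓝 0) := by
  obtain ⟨g, hg⟩ := exists_seq_measurable_infDist_lt u hu hne hweak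
  have hcauchy : ∀ t, CauchySeq (g · t) := fun t =>
    cauchySeq_of_le_geometric 2⁻¹ (3 / 2) (by norm_num) fun n => (hg n).2 t
  choose f hf using fun t => cauchySeq_tendsto_of_complete (hcauchy t)
  refine ⟨g, f, fun n => (hg n).1.1, hf, fun t => ?_⟩
  exact squeeze_zero (fun n => infDist_nonneg) (fun n => ((hg n).1.2 t).le)
    (tendsto_pow_atTop_nhds_zero_of_lt_one (by norm_num) (by norm_num))

end Approximation

/-- Kuratowski–Ryll-Nardzewski selection theorem. -/
theorem stmt_8 {T Y : Type*} [MeasurableSpace T]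
    [TopologicalSpace Y] [PolishSpace Y] [MeasurableSpace Y] [BorelSpace Y]
    (F : T → Set Y)
    (hne : ∀ t, (F t).Nonempty) (hclosed : ∀ t, IsClosed (F t))
    (hweak : ∀ U : Set Y, IsOpen U → MeasurableSet {t : T | (F t ∩ U).Nonempty}) :
    ∃ f : T → Y, Measurable f ∧ ∀ t : T, f t ∈ F t := by
  let := upgradeIsCompletelyMetrizable Y
  rcases isEmpty_or_nonempty Y with hY | hY
  · have : IsEmpty T := ⟨fun t => (hne t).elim fun y _ => hY.elim y⟩
    exact ⟨isEmptyElim, measurable_of_empty _, isEmptyElim⟩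
  obtain ⟨u, hu⟩ := exists_dense_seq Y
  obtain ⟨g, f, hg, hgf, hgF⟩ :=
    exists_tendsto_measurable_infDist_tendsto_zero u hu hne hweak
  exact ⟨f, measurable_of_tendsto_metrizable hg (tendsto_pi_nhds.2 hgf),
    fun t => (hclosed t).mem_of_tendsto_infDist_zero (hne t) (hgf t) (hgF t)⟩
end

section
/- Let (T, 𝒯, λ) be an atomless probability space, Y a countable complete metric space, and f, g : T → Y two measurable functions. Then for every t ∈ [0,1] there exists a measurable function h : T → Y with h(s) ∈ {f(s), g(s)} for all s ∈ T and λ ∘ h⁻¹ = t (λ ∘ f⁻¹) + (1−t)(λ ∘ g⁻¹). (This is the key step establishing convexity of the set of distributions of selections.) -/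
/-!
Split `T` into the countably many cells `{f = y, g = y'}`. By Sierpiński's theorem every cell
contains a measurable subset carrying exactly the fraction `r` of its mass; let `B` be the union of
these subsets and `h` equal `f` on `B` and `g` off `B`. Then the joint law of `(f, g)` restricted to
`B` is `r` times the full joint law, and restricted to `Bᶜ` it is `1 - r` times it; projecting to
the first, resp. second, coordinate gives the law of `h`.
-/

open MeasureTheory
open scoped NNReal

/-- The probability space `(T, 𝒯, lam)` is atomless. -/
def AtomlessMeasure {T : Type*} [MeasurableSpace T] (lam : Measure T) : Prop :=
  ∀ s : Set T, MeasurableSet s → 0 < lam s →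
    ∃ u, u ⊆ s ∧ MeasurableSet u ∧ 0 < lam u ∧ lam u < lam s

open Set
open scoped ENNReal

section

variable {T : Type*} [MeasurableSpace T] {μ : Measure T}

/-- `v` enlarges `u` by at least half of the largest mass that can still be added to `u` inside `s`
without exceeding `c`. -/
theorem exists_greedy_extension [IsFiniteMeasure μ] {s u : Set T} {c : ℝ≥0∞}
    (hus : u ⊆ s) (hu : MeasurableSet u) (huc : μ u ≤ c) :
    ∃ v, u ⊆ v ∧ v ⊆ s ∧ MeasurableSet v ∧ μ v ≤ c ∧
      ∀ w ⊆ s \ u, MeasurableSet w → μ u + μ w ≤ c → 2 * μ u + μ w ≤ 2 * μ v := by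
  set P := {w | w ⊆ s \ u ∧ MeasurableSet w ∧ μ u + μ w ≤ c}
  set δ := ⨆ w ∈ P, μ w
  have hnear : ∃ w ∈ P, δ ≤ 2 * μ w := by
    rcases eq_zero_or_pos δ with hδ | hδ
    · exact ⟨∅, ⟨empty_subset _, .empty, by simpa using huc⟩, by simp [hδ]⟩
    · have hδtop : δ ≠ ⊤ := ne_top_of_le_ne_top (measure_ne_top μ s)
        (iSup₂_le fun w hw => measure_mono (hw.1.trans sdiff_subset))
      obtain ⟨w, hw, hlt⟩ := lt_biSup_iff.mp (ENNReal.half_lt_self hδ.ne' hδtop)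
      refine ⟨w, hw, ?_⟩
      rw [mul_comm]
      exact (ENNReal.div_le_iff two_ne_zero ENNReal.ofNat_ne_top).mp hlt.le
  obtain ⟨v, ⟨hvsu, hv, hvc⟩, hδv⟩ := hnear
  have huv : μ (u ∪ v) = μ u + μ v :=
    measure_union (disjoint_left.mpr fun _ hxu hxv => (hvsu hxv).2 hxu) hv
  refine ⟨u ∪ v, subset_union_left, union_subset hus (hvsu.trans sdiff_subset), hu.union hv,
    huv ▸ hvc, fun w hws hw hwc => ?_⟩
  calc 2 * μ u + μ w ≤ 2 * μ u + δ := by gcongr; exact le_biSup μ ⟨hws, hw, hwc⟩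
    _ ≤ 2 * μ u + 2 * μ v := by gcongr
    _ = 2 * μ (u ∪ v) := by rw [huv, mul_add]

theorem MeasureTheory.Measure.eq_one_sub_smul_of_smul_add_eq {Z : Type*} [MeasurableSpace Z] {ν ρ : Measure Z}
    [IsFiniteMeasure ν] {r : ℝ≥0} (hr : r ≤ 1) (h : r • ν + ρ = ν) : ρ = (1 - r) • ν := by
  ext E
  have hE : (r : ℝ≥0∞) * ν E + ρ E = ν E := by
    simpa only [Measure.add_apply, Measure.smul_apply, ENNReal.smul_def, smul_eq_mul]
      using congrArg (· E) h
  have hsplit : (r : ℝ≥0∞) * ν E + ((1 - r : ℝ≥0) : ℝ≥0∞) * ν E = ν E := by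
    rw [← add_mul, ← ENNReal.coe_add, add_tsub_cancel_of_le hr, ENNReal.coe_one, one_mul]
  simpa only [Measure.smul_apply, ENNReal.smul_def, smul_eq_mul] using
    (ENNReal.add_right_inj (ENNReal.mul_ne_top ENNReal.coe_ne_top (measure_ne_top ν E))).mp
      (hE.trans hsplit.symm)

theorem map_restrict_compl_eq_one_sub_smul [IsFiniteMeasure μ] {Z : Type*} [MeasurableSpace Z]
    {φ : T → Z} (hφ : Measurable φ) {B : Set T} (hB : MeasurableSet B) {r : ℝ≥0} (hr : r ≤ 1)
    (hBφ : (μ.restrict B).map φ = r • μ.map φ) :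
    (μ.restrict Bᶜ).map φ = (1 - r) • μ.map φ := by
  refine Measure.eq_one_sub_smul_of_smul_add_eq hr ?_
  rw [← hBφ, ← Measure.map_add _ _ hφ, Measure.restrict_add_restrict_compl hB]

namespace AtomlessMeasure

theorem exists_subset_two_mul_le (hμ : AtomlessMeasure μ) {s : Set T} (hs : MeasurableSet s)
    (hs0 : 0 < μ s) : ∃ u ⊆ s, MeasurableSet u ∧ 0 < μ u ∧ 2 * μ u ≤ μ s := by
  obtain ⟨v, hvs, hv, hv0, hvlt⟩ := hμ s hs hs0
  have hsum : μ v + μ (s \ v) = μ s := by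
    rw [← measure_inter_add_sdiff s hv, inter_eq_right.mpr hvs]
  have hd0 : 0 < μ (s \ v) := pos_iff_ne_zero.mpr fun h0 => by
    rw [h0, add_zero] at hsum
    exact hvlt.ne hsum
  rcases le_total (μ v) (μ (s \ v)) with hle | hle
  · exact ⟨v, hvs, hv, hv0, by rw [two_mul, ← hsum]; gcongr⟩
  · exact ⟨s \ v, sdiff_subset, hs.diff hv, hd0, by rw [two_mul, ← hsum]; gcongr⟩

variable [IsFiniteMeasure μ]

theorem exists_subset_pos_le (hμ : AtomlessMeasure μ) {s : Set T} (hs : MeasurableSet s)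
    (hs0 : 0 < μ s) {ε : ℝ≥0∞} (hε : 0 < ε) : ∃ u ⊆ s, MeasurableSet u ∧ 0 < μ u ∧ μ u ≤ ε := by
  have halving : ∀ n : ℕ, ∃ u ⊆ s, MeasurableSet u ∧ 0 < μ u ∧ 2 ^ n * μ u ≤ μ s := by
    intro n
    induction n with
    | zero => exact ⟨s, subset_rfl, hs, hs0, by simp⟩
    | succ n ih =>
      obtain ⟨u, hus, hu, hu0, hun⟩ := ih
      obtain ⟨v, hvu, hv, hv0, hv2⟩ := hμ.exists_subset_two_mul_le hu hu0
      refine ⟨v, hvu.trans hus, hv, hv0, ?_⟩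
      calc 2 ^ (n + 1) * μ v = 2 ^ n * (2 * μ v) := by ring
        _ ≤ 2 ^ n * μ u := by gcongr
        _ ≤ μ s := hun
  obtain ⟨n, hn⟩ := ENNReal.exists_nat_mul_gt hε.ne' (measure_ne_top μ s)
  obtain ⟨u, hus, hu, hu0, hun⟩ := halving n
  refine ⟨u, hus, hu, hu0, ?_⟩
  have hlt : (n : ℝ≥0∞) * μ u < n * ε :=
    calc (n : ℝ≥0∞) * μ u ≤ 2 ^ n * μ u := by gcongr; exact_mod_cast n.lt_two_pow_self.le
      _ ≤ μ s := hun
      _ < n * ε := hn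
  by_contra! hεu
  exact hlt.not_ge (by gcongr)

/-- Sierpiński's theorem. -/
theorem exists_subset_measure_eq (hμ : AtomlessMeasure μ) {s : Set T} (hs : MeasurableSet s)
    {c : ℝ≥0∞} (hc : c ≤ μ s) : ∃ u ⊆ s, MeasurableSet u ∧ μ u = c := by
  let K := {u : Set T // u ⊆ s ∧ MeasurableSet u ∧ μ u ≤ c}
  have hstep : ∀ u : K, ∃ v : K, u.1 ⊆ v.1 ∧ ∀ w ⊆ s \ u.1, MeasurableSet w →
      μ u.1 + μ w ≤ c → 2 * μ u.1 + μ w ≤ 2 * μ v.1 := fun ⟨_, hus, hu, huc⟩ =>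
    let ⟨v, huv, hvs, hv, hvc, hmax⟩ := exists_greedy_extension hus hu huc
    ⟨⟨v, hvs, hv, hvc⟩, huv, hmax⟩
  choose F hF_sub hF_max using hstep
  let k : ℕ → K := fun n => F^[n] ⟨∅, empty_subset s, .empty, by simp⟩
  have hk : ∀ n, k (n + 1) = F (k n) := fun n => Function.iterate_succ_apply' F n _
  set U := ⋃ n, (k n).1
  have hU : MeasurableSet U := .iUnion fun n => (k n).2.2.1
  have hUμ : μ U = ⨆ n, μ (k n).1 :=
    Monotone.measure_iUnion (monotone_nat_of_le_succ fun n => hk n ▸ hF_sub (k n))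
  have hUc : μ U ≤ c := hUμ ▸ iSup_le fun n => (k n).2.2.2
  rcases hUc.eq_or_lt with hUc | hlt
  · exact ⟨U, iUnion_subset fun n => (k n).2.1, hU, hUc⟩
  exfalso
  -- A set of positive mass left over after the greedy steps would be added at every step.
  obtain ⟨w, hwU, hw, hw0, hwc⟩ := hμ.exists_subset_pos_le (hs.diff hU)
    ((tsub_pos_of_lt (hlt.trans_le hc)).trans_le le_measure_sdiff) (tsub_pos_of_lt hlt)
  have hgrow : ∀ n : ℕ, (n : ℝ≥0∞) * μ w ≤ 2 * μ (k n).1 := by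
    intro n
    induction n with
    | zero => simp
    | succ n ih =>
      have hkU : (k n).1 ⊆ U := subset_iUnion (fun n => (k n).1) n
      have hkw : μ (k n).1 + μ w ≤ c :=
        calc μ (k n).1 + μ w ≤ μ U + (c - μ U) := add_le_add (measure_mono hkU) hwc
          _ = c := add_tsub_cancel_of_le hlt.le
      calc ((n + 1 : ℕ) : ℝ≥0∞) * μ w = n * μ w + μ w := by push_cast; ring
        _ ≤ 2 * μ (k n).1 + μ w := by gcongr
        _ ≤ 2 * μ (k (n + 1)).1 :=
          hk n ▸ hF_max (k n) w (hwU.trans (sdiff_subset_sdiff_right hkU)) hw hkw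
  obtain ⟨n, hn⟩ := ENNReal.exists_nat_mul_gt hw0.ne'
    (ENNReal.mul_ne_top (ENNReal.ofNat_ne_top (n := 2)) (measure_ne_top μ s))
  exact (hn.trans_le (hgrow n)).not_ge (by gcongr; exact (k n).2.1)

theorem exists_measurableSet_map_restrict_eq_smul (hμ : AtomlessMeasure μ) {Z : Type*}
    [MeasurableSpace Z] [Countable Z] [MeasurableSingletonClass Z] {φ : T → Z}
    (hφ : Measurable φ) {r : ℝ≥0} (hr : r ≤ 1) :
    ∃ B, MeasurableSet B ∧ (μ.restrict B).map φ = r • μ.map φ := by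
  have hfib : ∀ z, MeasurableSet (φ ⁻¹' {z}) := fun z => hφ (measurableSet_singleton z)
  choose A hAsub hA hAμ using fun z => hμ.exists_subset_measure_eq (hfib z)
    (c := r * μ (φ ⁻¹' {z})) (mul_le_of_le_one_left' (by exact_mod_cast hr))
  have hfib_inter : ∀ z, φ ⁻¹' {z} ∩ ⋃ z', A z' = A z := by
    intro z
    ext t
    simp only [mem_inter_iff, mem_iUnion, mem_preimage, mem_singleton_iff]
    constructor
    · rintro ⟨hz, z', ht⟩
      obtain rfl : z' = z := (hAsub z' ht).symm.trans hz
      exact ht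
    · exact fun ht => ⟨hAsub z ht, z, ht⟩
  refine ⟨⋃ z, A z, .iUnion hA, Measure.ext_iff_singleton.mpr fun z => ?_⟩
  rw [Measure.map_apply hφ (measurableSet_singleton z), Measure.restrict_apply (hfib z),
    hfib_inter, hAμ, Measure.smul_apply, Measure.map_apply hφ (measurableSet_singleton z),
    ENNReal.smul_def, smul_eq_mul]

end AtomlessMeasure

end

theorem stmt_16_general {T Y : Type*} [MeasurableSpace T]
    [MetricSpace Y] [Countable Y] [MeasurableSpace Y] [BorelSpace Y]
    (lam : Measure T) [IsProbabilityMeasure lam] (hatomless : AtomlessMeasure lam)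
    (f g : T → Y) (hf : Measurable f) (hg : Measurable g) :
    ∀ r : ℝ≥0, r ≤ 1 →
      ∃ h : T → Y, Measurable h ∧ (∀ s : T, h s ∈ ({f s, g s} : Set Y)) ∧
        lam.map h = r • lam.map f + (1 - r) • lam.map g := by
  intro r hr
  classical
  have hφ : Measurable fun t => (f t, g t) := hf.prodMk hg
  obtain ⟨B, hB, hBφ⟩ := hatomless.exists_measurableSet_map_restrict_eq_smul hφ hr
  have hBcφ := map_restrict_compl_eq_one_sub_smul hφ hB hr hBφ
  have hh : Measurable (B.piecewise f g) := hf.piecewise hB hg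
  refine ⟨B.piecewise f g, hh, fun s => ?_, ?_⟩
  · by_cases hs : s ∈ B <;> simp [hs]
  calc lam.map (B.piecewise f g)
      = (lam.restrict B + lam.restrict Bᶜ).map (B.piecewise f g) := by
        rw [Measure.restrict_add_restrict_compl hB]
    _ = (lam.restrict B).map f + (lam.restrict Bᶜ).map g := by
        rw [Measure.map_add _ _ hh]
        congr 1 <;> refine Measure.map_congr (ae_restrict_of_forall_mem ?_ fun t ht => ?_)
        exacts [hB, B.piecewise_eq_of_mem f g ht, hB.compl, B.piecewise_eq_of_notMem f g ht]
    _ = ((lam.restrict B).map fun t => (f t, g t)).map Prod.fst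
          + ((lam.restrict Bᶜ).map fun t => (f t, g t)).map Prod.snd := by
        rw [Measure.map_map measurable_fst hφ, Measure.map_map measurable_snd hφ]
        rfl
    _ = r • lam.map f + (1 - r) • lam.map g := by
        rw [hBφ, hBcφ, Measure.map_smul, Measure.map_smul, Measure.map_map measurable_fst hφ,
          Measure.map_map measurable_snd hφ]
        rfl

theorem stmt_16 {T Y : Type*} [MeasurableSpace T]
    [MetricSpace Y] [Countable Y] [CompleteSpace Y] [MeasurableSpace Y] [BorelSpace Y]
    (lam : Measure T) [IsProbabilityMeasure lam] (hatomless : AtomlessMeasure lam)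
    (f g : T → Y) (hf : Measurable f) (hg : Measurable g) :
    ∀ r : ℝ≥0, r ≤ 1 →
      ∃ h : T → Y, Measurable h ∧ (∀ s : T, h s ∈ ({f s, g s} : Set Y)) ∧
        lam.map h = r • lam.map f + (1 - r) • lam.map g :=
  stmt_16_general lam hatomless f g hf hg
end
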